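/- Let z be logistic-distributed (CDF sigm) and a ∈ ℝ, h = max(0, z + a). Then the conditional expectation E[h | h > 0] = softplus(a)/sigm(a). -/

import Mathlib

noncomputable def sigm (x : ℝ) : ℝ := (1 + Real.exp (-x))⁻¹

/-!
The logistic density is `sigm' = sigm * (1 - sigm)`, so `P(h > 0) = ∫_{-a}^∞ sigm' = sigm a`.
Since `(z + a) sigm z - softplus z` is a primitive of `(z + a) sigm' z` tending to `a` at `+∞`,
`E[h] = ∫_{-a}^∞ (z + a) sigm' z = a + softplus (-a) = softplus a`.
-/

open Real MeasureTheory Filter Set Topology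

noncomputable def softplus (x : ℝ) : ℝ := log (1 + exp x)

lemma sigm_pos (x : ℝ) : 0 < sigm x := by
  unfold sigm; positivity

lemma sigm_lt_one (x : ℝ) : sigm x < 1 :=
  inv_lt_one_of_one_lt₀ (lt_add_of_pos_right 1 (exp_pos (-x)))

lemma sigm_eq_exp_div (x : ℝ) : sigm x = exp x / (1 + exp x) := by
  rw [sigm, exp_neg]
  field_simp
  ring

lemma sigm_neg (x : ℝ) : sigm (-x) = exp (-x) * sigm x := by
  rw [sigm_eq_exp_div, sigm]
  ring

lemma one_sub_sigm (x : ℝ) : 1 - sigm x = sigm (-x) := by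
  rw [sigm_neg, sigm]
  field_simp
  ring

lemma hasDerivAt_sigm (x : ℝ) : HasDerivAt sigm (sigm x * (1 - sigm x)) x := by
  have h : HasDerivAt (fun y => 1 + exp (-y)) (-exp (-x)) x := by
    simpa using ((hasDerivAt_neg x).exp).const_add 1
  refine (h.inv (by positivity)).congr_deriv ?_
  rw [one_sub_sigm, sigm_neg, sigm]
  field_simp

lemma sigm_mul_one_sub_sigm_nonneg (x : ℝ) : 0 ≤ sigm x * (1 - sigm x) :=
  mul_nonneg (sigm_pos x).le (sub_nonneg.2 (sigm_lt_one x).le)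

lemma tendsto_sigm_atTop : Tendsto sigm atTop (𝓝 1) := by
  have h : Tendsto (fun x => 1 + exp (-x)) atTop (𝓝 1) := by
    simpa using tendsto_exp_neg_atTop_nhds_zero.const_add 1
  have h' := h.inv₀ one_ne_zero
  rwa [inv_one] at h'

lemma softplus_eq_add_softplus_neg (x : ℝ) : softplus x = x + softplus (-x) := by
  have h : 1 + exp x = exp x * (1 + exp (-x)) := by
    rw [mul_add, mul_one, ← exp_add, add_neg_cancel, exp_zero, add_comm]
  rw [softplus, softplus, h, log_mul (exp_ne_zero x) (by positivity), log_exp]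

lemma hasDerivAt_softplus (x : ℝ) : HasDerivAt softplus (sigm x) x :=
  (((hasDerivAt_exp x).const_add 1).log (by positivity)).congr_deriv
    (sigm_eq_exp_div x).symm

lemma tendsto_softplus_atBot : Tendsto softplus atBot (𝓝 0) := by
  have h : ContinuousAt (fun y => log (1 + y)) 0 :=
    (continuousAt_const.add continuousAt_id).log (by norm_num)
  show Tendsto (fun x => log (1 + exp x)) atBot (𝓝 0)
  simpa [Function.comp_def] using h.tendsto.comp tendsto_exp_atBot

lemma integral_Ioi_sigm_mul_one_sub_sigm (b : ℝ) :
    ∫ z in Ioi b, sigm z * (1 - sigm z) = 1 - sigm b :=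
  integral_Ioi_of_hasDerivAt_of_nonneg' (fun x _ => hasDerivAt_sigm x)
    (fun x _ => sigm_mul_one_sub_sigm_nonneg x) tendsto_sigm_atTop

lemma hasDerivAt_mul_sigm_sub_softplus (a z : ℝ) :
    HasDerivAt (fun y => (y + a) * sigm y - softplus y) ((z + a) * (sigm z * (1 - sigm z))) z := by
  refine ((((hasDerivAt_id' z).add_const a).mul (hasDerivAt_sigm z)).sub
    (hasDerivAt_softplus z)).congr_deriv ?_
  ring

lemma tendsto_mul_sigm_sub_softplus_atTop (a : ℝ) :
    Tendsto (fun z => (z + a) * sigm z - softplus z) atTop (𝓝 a) := by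
  have hrw : ∀ z, (z + a) * sigm z - softplus z
      = a - (z * exp (-z) + a * exp (-z)) * sigm z - softplus (-z) := by
    intro z
    have h := one_sub_sigm z
    rw [sigm_neg] at h
    rw [softplus_eq_add_softplus_neg z]
    linear_combination -(z + a) * h
  have hexp : Tendsto (fun z => z * exp (-z) + a * exp (-z)) atTop (𝓝 (0 + a * 0)) := by
    refine Tendsto.add ?_ (tendsto_exp_neg_atTop_nhds_zero.const_mul a)
    simpa using tendsto_pow_mul_exp_neg_atTop_nhds_zero 1
  have hlim := ((tendsto_const_nhds (x := a)).sub (hexp.mul tendsto_sigm_atTop)).sub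
    (tendsto_softplus_atBot.comp tendsto_neg_atTop_atBot)
  simp only [add_zero, mul_zero, zero_mul, sub_zero] at hlim
  exact hlim.congr fun z => (hrw z).symm

lemma integral_Ioi_add_mul_sigm_mul_one_sub_sigm (a : ℝ) :
    ∫ z in Ioi (-a), (z + a) * (sigm z * (1 - sigm z)) = softplus a := by
  rw [integral_Ioi_of_hasDerivAt_of_nonneg' (fun z _ => hasDerivAt_mul_sigm_sub_softplus a z)
    (fun z hz => mul_nonneg (neg_lt_iff_pos_add.1 hz).le (sigm_mul_one_sub_sigm_nonneg z))
    (tendsto_mul_sigm_sub_softplus_atTop a), softplus_eq_add_softplus_neg a]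
  ring

lemma max_zero_add_mul_eq_indicator (a : ℝ) (f : ℝ → ℝ) :
    (fun z => max 0 (z + a) * f z) = (Ioi (-a)).indicator (fun z => (z + a) * f z) := by
  ext z
  by_cases hz : z ∈ Ioi (-a)
  · rw [indicator_of_mem hz, max_eq_right (neg_lt_iff_pos_add.1 hz).le]
  · rw [indicator_of_notMem hz, max_eq_left (by linarith [notMem_Ioi.1 hz]), zero_mul]

/-- For logistic noise `z` and `h = max 0 (z + a)`, the conditional expectation
`E[h | h > 0] = E[h]/P(h > 0)` equals `softplus a / sigm a`. -/
theorem noisy_rectifier_conditional_expectation (a : ℝ) :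
    (∫ z : ℝ, max 0 (z + a) * (sigm z * (1 - sigm z)))
      / (∫ z in {z : ℝ | 0 < max 0 (z + a)}, sigm z * (1 - sigm z))
      = Real.log (1 + Real.exp a) / sigm a := by
  have hset : {z : ℝ | 0 < max 0 (z + a)} = Ioi (-a) := by
    ext z
    simp [neg_lt_iff_pos_add]
  have hnum : ∫ z : ℝ, max 0 (z + a) * (sigm z * (1 - sigm z)) = softplus a := by
    rw [max_zero_add_mul_eq_indicator, integral_indicator measurableSet_Ioi,
      integral_Ioi_add_mul_sigm_mul_one_sub_sigm]
  rw [hnum, hset, integral_Ioi_sigm_mul_one_sub_sigm, one_sub_sigm, neg_neg, softplus]
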